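/- Independence of ε₋ of the chosen perfect matching: let E be a finite set, σ₀, σ₁ permutations of E, and for a perfect matching m set ρ_{m,c} = (I − ς_{m,c})^{-1} (c = 0,1). Then for any two perfect matchings m and m̂, and for all h₁, h₂ in the subgroup H₁ ⊆ ℤ^E generated by differences of perfect matchings, one has h₁ᵀ (ρ_{m,0} − ρ_{m,1}) h₂ = h₁ᵀ (ρ_{m̂,0} − ρ_{m̂,1}) h₂. -/

import Mathlib

open Finset Matrix

variable {E : Type*}

/-- A perfect matching of `(E, σ₀, σ₁)`: a `{0,1}`-valued function on `E` such that every
cycle (orbit) of `σ₀` and every cycle of `σ₁` contains exactly one element with value `1`. -/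
def IsPerfectMatching (σ₀ σ₁ : Equiv.Perm E) (m : E → ℤ) : Prop :=
  (∀ e, m e = 0 ∨ m e = 1) ∧
  (∀ e, ∃! e', σ₀.SameCycle e e' ∧ m e' = 1) ∧
  (∀ e, ∃! e', σ₁.SameCycle e e' ∧ m e' = 1)

/-- The "broken" permutation matrix `ς_{m,σ}`: the matrix of the permutation `σ`
(with `(σ e, e)`-entry `1`) in which every column `e` with `m e = 1` is replaced by zero. -/
def brokenPermMatrix [DecidableEq E] (σ : Equiv.Perm E) (m : E → ℤ) : Matrix E E ℤ :=
  Matrix.of fun e' e => if e' = σ e ∧ m e = 0 then 1 else 0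

/-- The matrix `ρ_{m,σ} = (I - ς_{m,σ})⁻¹`. -/
noncomputable def rhoMatrix [Fintype E] [DecidableEq E] (σ : Equiv.Perm E) (m : E → ℤ) :
    Matrix E E ℤ :=
  (1 - brokenPermMatrix σ m)⁻¹

/-- The subgroup `H₁ ⊆ ℤ^E` generated by all differences of perfect matchings. -/
def matchingHomology (σ₀ σ₁ : Equiv.Perm E) : AddSubgroup (E → ℤ) :=
  AddSubgroup.closure
    {x | ∃ m' m'', IsPerfectMatching σ₀ σ₁ m' ∧ IsPerfectMatching σ₀ σ₁ m'' ∧ x = m' - m''}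

/-!
The column `e` of `ς = ς_{m,σ}` is `δ_{σ e}` if `m e = 0` and zero otherwise, so `ς` is nilpotent
as soon as every cycle of `σ` meets the support of `m`, and `ρ = (1 - ς)⁻¹` is a genuine inverse.
If `e` is the only element of its cycle `C` with `m e ≠ 0`, then `𝟙_C (1 - ς) = δ_e` and
`(1 - ς) 𝟙_C = δ_{σ e}`: row `e` and column `σ e` of `ρ` both equal `𝟙_C`. So for `h` with zero
sum on every cycle, as every element of `H₁` has, `ρ h` vanishes at `e` and `hᵀ ρ` at `σ e`.
By the resolvent identity `ρ_m - ρ_m̂ = ρ_m (ς_m - ς_m̂) ρ_m̂`, the difference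
`h₁ᵀ (ρ_m - ρ_m̂) h₂` is a sum over the columns `e` of `ς_m - ς_m̂`; such a column is nonzero only
if `e` is marked by one of `m`, `m̂` and not the other, and then one of the two factors vanishes.
-/

namespace Equiv.Perm

variable [Fintype E] [DecidableEq E]

def cycleIndicator (σ : Equiv.Perm E) (e : E) : E → ℤ :=
  fun x => if σ.SameCycle e x then 1 else 0

def zeroCycleSums (σ : Equiv.Perm E) : AddSubgroup (E → ℤ) where
  carrier := {h | ∀ e, σ.cycleIndicator e ⬝ᵥ h = 0}
  add_mem' ha hb e := by rw [dotProduct_add, ha e, hb e, add_zero]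
  zero_mem' e := dotProduct_zero _
  neg_mem' ha e := by rw [dotProduct_neg, ha e, neg_zero]

def MarksEachCycleOnce (σ : Equiv.Perm E) (m : E → ℤ) : Prop :=
  ∀ e, ∃! e', σ.SameCycle e e' ∧ m e' ≠ 0

end Equiv.Perm

open Equiv.Perm

section
variable [DecidableEq E]

theorem brokenPermMatrix_apply_ne_zero_iff {σ : Equiv.Perm E} {m : E → ℤ} {e' e : E} :
    brokenPermMatrix σ m e' e ≠ 0 ↔ e' = σ e ∧ m e = 0 := by
  simp [brokenPermMatrix]

theorem apply_pow_eq_zero_of_brokenPermMatrix_pow_apply_ne_zero [Fintype E] {σ : Equiv.Perm E}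
    {m : E → ℤ} {k : ℕ} {e' e : E} (h : (brokenPermMatrix σ m ^ k) e' e ≠ 0) :
    ∀ j < k, m ((σ ^ j) e) = 0 := by
  induction k generalizing e with
  | zero => simp
  | succ k ih =>
    rw [pow_succ, Matrix.mul_apply] at h
    obtain ⟨x, -, hx⟩ := Finset.exists_ne_zero_of_sum_ne_zero h
    obtain ⟨rfl, he⟩ := brokenPermMatrix_apply_ne_zero_iff.mp (right_ne_zero_of_mul hx)
    have ih := ih (left_ne_zero_of_mul hx)
    rintro (_ | j) hj
    · exact he
    · simpa [pow_succ] using ih j (by omega)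

theorem isNilpotent_brokenPermMatrix [Fintype E] {σ : Equiv.Perm E} {m : E → ℤ}
    (hm : ∀ e, ∃ e', σ.SameCycle e e' ∧ m e' ≠ 0) : IsNilpotent (brokenPermMatrix σ m) := by
  refine ⟨orderOf σ, Matrix.ext fun e' e => by_contra fun h => ?_⟩
  obtain ⟨x, hx, hmx⟩ := hm e
  obtain ⟨j, hj, rfl⟩ := hx.exists_pow_eq'
  exact hmx (apply_pow_eq_zero_of_brokenPermMatrix_pow_apply_ne_zero h j hj)

theorem vecMul_brokenPermMatrix_apply [Fintype E] (σ : Equiv.Perm E) (m w : E → ℤ) (e : E) :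
    (w ᵥ* brokenPermMatrix σ m) e = if m e = 0 then w (σ e) else 0 := by
  split_ifs with he <;> simp [vecMul, dotProduct, brokenPermMatrix, he]

theorem brokenPermMatrix_mulVec_apply [Fintype E] (σ : Equiv.Perm E) (m u : E → ℤ) (e : E) :
    (brokenPermMatrix σ m *ᵥ u) e = if m (σ⁻¹ e) = 0 then u (σ⁻¹ e) else 0 := by
  have hσ : ∀ x, e = σ x ↔ x = σ⁻¹ e := fun x => by rw [eq_comm, ← Equiv.Perm.eq_inv_iff_eq]
  simp only [mulVec, dotProduct, brokenPermMatrix, of_apply, hσ, ite_and, ite_mul, one_mul,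
    zero_mul, Finset.sum_ite_eq', Finset.mem_univ, if_true]

end

theorem Equiv.Perm.MarksEachCycleOnce.eq_of_sameCycle {σ : Equiv.Perm E} {m : E → ℤ}
    (hm : σ.MarksEachCycleOnce m) {e x : E} (he : m e ≠ 0) (hx : σ.SameCycle e x)
    (hmx : m x ≠ 0) : x = e :=
  (hm e).unique ⟨hx, hmx⟩ ⟨.refl σ e, he⟩

theorem Equiv.Perm.MarksEachCycleOnce.exists_ne_zero {σ : Equiv.Perm E} {m : E → ℤ}
    (hm : σ.MarksEachCycleOnce m) (e : E) : ∃ e', σ.SameCycle e e' ∧ m e' ≠ 0 :=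
  (hm e).exists

section
variable [Fintype E] [DecidableEq E] {σ : Equiv.Perm E} {m : E → ℤ}

theorem isUnit_one_sub_brokenPermMatrix (hm : ∀ e, ∃ e', σ.SameCycle e e' ∧ m e' ≠ 0) :
    IsUnit (1 - brokenPermMatrix σ m) :=
  (isNilpotent_brokenPermMatrix hm).isUnit_one_sub

theorem one_sub_brokenPermMatrix_mul_rhoMatrix (hm : ∀ e, ∃ e', σ.SameCycle e e' ∧ m e' ≠ 0) :
    (1 - brokenPermMatrix σ m) * rhoMatrix σ m = 1 :=
  mul_nonsing_inv _ ((isUnit_iff_isUnit_det _).mp (isUnit_one_sub_brokenPermMatrix hm))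

theorem rhoMatrix_mul_one_sub_brokenPermMatrix (hm : ∀ e, ∃ e', σ.SameCycle e e' ∧ m e' ≠ 0) :
    rhoMatrix σ m * (1 - brokenPermMatrix σ m) = 1 :=
  nonsing_inv_mul _ ((isUnit_iff_isUnit_det _).mp (isUnit_one_sub_brokenPermMatrix hm))

theorem rhoMatrix_sub_rhoMatrix {mh : E → ℤ} (hm : ∀ e, ∃ e', σ.SameCycle e e' ∧ m e' ≠ 0)
    (hmh : ∀ e, ∃ e', σ.SameCycle e e' ∧ mh e' ≠ 0) :
    rhoMatrix σ m - rhoMatrix σ mh =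
      rhoMatrix σ m * (brokenPermMatrix σ m - brokenPermMatrix σ mh) * rhoMatrix σ mh := by
  rw [rhoMatrix, rhoMatrix, inv_sub_inv (iff_of_true (isUnit_one_sub_brokenPermMatrix hm)
    (isUnit_one_sub_brokenPermMatrix hmh)), sub_sub_sub_cancel_left]

theorem cycleIndicator_vecMul_one_sub_brokenPermMatrix (hm : σ.MarksEachCycleOnce m) {e : E}
    (he : m e ≠ 0) : σ.cycleIndicator e ᵥ* (1 - brokenPermMatrix σ m) = Pi.single e 1 := by
  ext x
  rw [vecMul_sub, vecMul_one, Pi.sub_apply, vecMul_brokenPermMatrix_apply]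
  by_cases hxe : x = e
  · subst hxe
    simp [cycleIndicator, he, SameCycle.refl]
  by_cases hx : σ.SameCycle e x
  · have hmx : m x = 0 := by_contra fun hmx => hxe (hm.eq_of_sameCycle he hx hmx)
    simp [cycleIndicator, hx, hxe, hmx]
  · simp [cycleIndicator, hx, hxe]

theorem one_sub_brokenPermMatrix_mulVec_cycleIndicator (hm : σ.MarksEachCycleOnce m) {e : E}
    (he : m e ≠ 0) : (1 - brokenPermMatrix σ m) *ᵥ σ.cycleIndicator e = Pi.single (σ e) 1 := by
  ext x
  rw [sub_mulVec, one_mulVec, Pi.sub_apply, brokenPermMatrix_mulVec_apply]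
  obtain ⟨y, rfl⟩ := σ.surjective x
  by_cases hye : y = e
  · subst hye
    simp [cycleIndicator, he, SameCycle.refl]
  by_cases hy : σ.SameCycle e y
  · have hmy : m y = 0 := by_contra fun hmy => hye (hm.eq_of_sameCycle he hy hmy)
    simp [cycleIndicator, hy, hye, hmy]
  · simp [cycleIndicator, hy, hye]

end

namespace Equiv.Perm.MarksEachCycleOnce

variable [Fintype E] [DecidableEq E] {σ : Equiv.Perm E} {m : E → ℤ}

theorem rhoMatrix_row (hm : σ.MarksEachCycleOnce m) {e : E} (he : m e ≠ 0) :
    (rhoMatrix σ m).row e = σ.cycleIndicator e := by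
  rw [← single_one_vecMul, ← cycleIndicator_vecMul_one_sub_brokenPermMatrix hm he, vecMul_vecMul,
    one_sub_brokenPermMatrix_mul_rhoMatrix hm.exists_ne_zero, vecMul_one]

theorem rhoMatrix_col (hm : σ.MarksEachCycleOnce m) {e : E} (he : m e ≠ 0) :
    (rhoMatrix σ m).col (σ e) = σ.cycleIndicator e := by
  rw [← mulVec_single_one, ← one_sub_brokenPermMatrix_mulVec_cycleIndicator hm he, mulVec_mulVec,
    rhoMatrix_mul_one_sub_brokenPermMatrix hm.exists_ne_zero, one_mulVec]

theorem rhoMatrix_mulVec_apply_eq_zero (hm : σ.MarksEachCycleOnce m) {h : E → ℤ}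
    (hh : h ∈ σ.zeroCycleSums) {e : E} (he : m e ≠ 0) : (rhoMatrix σ m *ᵥ h) e = 0 := by
  change (rhoMatrix σ m).row e ⬝ᵥ h = 0
  rw [rhoMatrix_row hm he]
  exact hh e

theorem vecMul_rhoMatrix_apply_eq_zero (hm : σ.MarksEachCycleOnce m) {h : E → ℤ}
    (hh : h ∈ σ.zeroCycleSums) {e : E} (he : m e ≠ 0) : (h ᵥ* rhoMatrix σ m) (σ e) = 0 := by
  change h ⬝ᵥ (rhoMatrix σ m).col (σ e) = 0
  rw [rhoMatrix_col hm he, dotProduct_comm]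
  exact hh e

theorem dotProduct_rhoMatrix_mulVec_eq {mh : E → ℤ} (hm : σ.MarksEachCycleOnce m)
    (hmh : σ.MarksEachCycleOnce mh) {h₁ h₂ : E → ℤ} (hh₁ : h₁ ∈ σ.zeroCycleSums)
    (hh₂ : h₂ ∈ σ.zeroCycleSums) :
    h₁ ⬝ᵥ rhoMatrix σ m *ᵥ h₂ = h₁ ⬝ᵥ rhoMatrix σ mh *ᵥ h₂ := by
  rw [← sub_eq_zero, ← dotProduct_sub, ← sub_mulVec,
    rhoMatrix_sub_rhoMatrix hm.exists_ne_zero hmh.exists_ne_zero, ← mulVec_mulVec,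
    ← mulVec_mulVec, dotProduct_mulVec, dotProduct_mulVec]
  refine Finset.sum_eq_zero fun e _ => ?_
  rw [vecMul_sub, Pi.sub_apply, vecMul_brokenPermMatrix_apply, vecMul_brokenPermMatrix_apply]
  by_cases he : m e = 0 <;> by_cases hhe : mh e = 0
  · simp [he, hhe]
  · simp [hmh.rhoMatrix_mulVec_apply_eq_zero hh₂ hhe]
  · simp [hm.vecMul_rhoMatrix_apply_eq_zero hh₁ he, he, hhe]
  · simp [he, hhe]

end Equiv.Perm.MarksEachCycleOnce

section
variable {σ : Equiv.Perm E} {m : E → ℤ}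

theorem marksEachCycleOnce_of_eq_one (h01 : ∀ e, m e = 0 ∨ m e = 1)
    (hm : ∀ e, ∃! e', σ.SameCycle e e' ∧ m e' = 1) : σ.MarksEachCycleOnce m := by
  have hne : ∀ x, m x ≠ 0 ↔ m x = 1 := fun x => by rcases h01 x with h | h <;> simp [h]
  simpa only [MarksEachCycleOnce, hne] using hm

theorem cycleIndicator_dotProduct_eq_one [Fintype E] [DecidableEq E]
    (h01 : ∀ e, m e = 0 ∨ m e = 1) (hm : ∀ e, ∃! e', σ.SameCycle e e' ∧ m e' = 1) (e : E) :
    σ.cycleIndicator e ⬝ᵥ m = 1 := by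
  obtain ⟨p, ⟨hp, hp1⟩, hpu⟩ := hm e
  rw [dotProduct, Finset.sum_eq_single_of_mem p (Finset.mem_univ p)]
  · simp [cycleIndicator, hp, hp1]
  · intro x _ hxp
    by_cases hx : σ.SameCycle e x
    · have hmx : m x = 0 := (h01 x).resolve_right fun hmx => hxp (hpu x ⟨hx, hmx⟩)
      simp [hmx]
    · simp [cycleIndicator, hx]

theorem sub_mem_zeroCycleSums [Fintype E] [DecidableEq E] {m' : E → ℤ}
    (h01 : ∀ e, m e = 0 ∨ m e = 1) (hm : ∀ e, ∃! e', σ.SameCycle e e' ∧ m e' = 1)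
    (h01' : ∀ e, m' e = 0 ∨ m' e = 1) (hm' : ∀ e, ∃! e', σ.SameCycle e e' ∧ m' e' = 1) :
    m - m' ∈ σ.zeroCycleSums := fun e => by
  rw [dotProduct_sub, cycleIndicator_dotProduct_eq_one h01 hm,
    cycleIndicator_dotProduct_eq_one h01' hm', sub_self]

end

theorem matchingHomology_le_inf_zeroCycleSums [Fintype E] [DecidableEq E]
    (σ₀ σ₁ : Equiv.Perm E) : matchingHomology σ₀ σ₁ ≤ σ₀.zeroCycleSums ⊓ σ₁.zeroCycleSums := by
  rw [matchingHomology, AddSubgroup.closure_le]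
  rintro _ ⟨m', m'', hm', hm'', rfl⟩
  exact ⟨sub_mem_zeroCycleSums hm'.1 hm'.2.1 hm''.1 hm''.2.1,
    sub_mem_zeroCycleSums hm'.1 hm'.2.2 hm''.1 hm''.2.2⟩

/-- The form `ε₋` given by `ρ_{m,0} - ρ_{m,1}` on the subgroup `H₁` generated by
differences of perfect matchings does not depend on the chosen perfect matching `m`. -/
theorem epsMinus_independent_of_matching [Fintype E] [DecidableEq E]
    (σ₀ σ₁ : Equiv.Perm E) (m mh : E → ℤ)
    (hm : IsPerfectMatching σ₀ σ₁ m) (hmh : IsPerfectMatching σ₀ σ₁ mh)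
    (h₁ h₂ : E → ℤ)
    (hh₁ : h₁ ∈ matchingHomology σ₀ σ₁) (hh₂ : h₂ ∈ matchingHomology σ₀ σ₁) :
    h₁ ⬝ᵥ (rhoMatrix σ₀ m - rhoMatrix σ₁ m).mulVec h₂ =
      h₁ ⬝ᵥ (rhoMatrix σ₀ mh - rhoMatrix σ₁ mh).mulVec h₂ := by
  obtain ⟨hh₁₀, hh₁₁⟩ := matchingHomology_le_inf_zeroCycleSums σ₀ σ₁ hh₁
  obtain ⟨hh₂₀, hh₂₁⟩ := matchingHomology_le_inf_zeroCycleSums σ₀ σ₁ hh₂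
  have heq₀ := (marksEachCycleOnce_of_eq_one hm.1 hm.2.1).dotProduct_rhoMatrix_mulVec_eq
    (marksEachCycleOnce_of_eq_one hmh.1 hmh.2.1) hh₁₀ hh₂₀
  have heq₁ := (marksEachCycleOnce_of_eq_one hm.1 hm.2.2).dotProduct_rhoMatrix_mulVec_eq
    (marksEachCycleOnce_of_eq_one hmh.1 hmh.2.2) hh₁₁ hh₂₁
  rw [sub_mulVec, dotProduct_sub, sub_mulVec, dotProduct_sub, heq₀, heq₁]
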